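/- Suppose P is a densely defined operator on a Hilbert space, L a bounded operator with ε‖L‖ ≤ 1/2 for some ε > 0, and Re(Pu, (Id + ε(L+L*))u) ≥ c₀‖u‖² for all u in a dense subspace of a closed subspace K. Then for all z ∈ ℂ with Re z ≤ c₀/(2(1+2ε‖L‖)) and all u in that dense subspace, ‖(P - z)u‖ ≥ (c₀/(2(1+2ε‖L‖)))‖u‖. -/

import Mathlib

/-!
Pair `(P - z) u` with the multiplier `A u`, where `A = 1 + ε (L + L*)`. Since `2 ε ‖L‖ ≤ 1`, `A` is
a positive operator of norm at most `M = 1 + 2 ε ‖L‖`, so `⟪u, A u⟫` is real and lies in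
`[0, M ‖u‖²]`. Hence `Re ⟪(P - z) u, A u⟫ ≥ c₀ ‖u‖² - Re z · M ‖u‖² ≥ c₀ ‖u‖² / 2`, while
Cauchy–Schwarz bounds the same quantity by `M ‖u‖ ‖(P - z) u‖`.
-/

open scoped InnerProductSpace

lemma IsSelfAdjoint.one_add_nonneg_of_norm_le_one {A : Type*} [CStarAlgebra A] [PartialOrder A]
    [StarOrderedRing A] {a : A} (ha : IsSelfAdjoint a) (h : ‖a‖ ≤ 1) : 0 ≤ 1 + a := by
  rw [← neg_le_iff_add_nonneg']
  calc -1 = -algebraMap ℝ A 1 := by rw [map_one]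
    _ ≤ -algebraMap ℝ A ‖a‖ := neg_le_neg (algebraMap_mono A h)
    _ ≤ a := ha.neg_algebraMap_norm_le_self

namespace ContinuousLinearMap
variable {H : Type*} [NormedAddCommGroup H] [InnerProductSpace ℂ H]

theorem IsPositive.mul_norm_le_norm_sub_smul {A : H →L[ℂ] H} (hA : A.IsPositive) {M c : ℝ}
    (hM : 0 < M) (hAM : ‖A‖ ≤ M) (hc : 0 ≤ c) {x u : H} (hx : c * ‖u‖ ^ 2 ≤ (⟪x, A u⟫_ℂ).re)
    {z : ℂ} (hz : z.re ≤ c / (2 * M)) : c / (2 * M) * ‖u‖ ≤ ‖x - z • u‖ := by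
  obtain ⟨hr0, him⟩ := Complex.nonneg_iff.mp (hA.inner_nonneg_right u)
  have hAu : ‖A u‖ ≤ M * ‖u‖ := (A.le_opNorm u).trans (by gcongr)
  have hrM : (⟪u, A u⟫_ℂ).re ≤ M * ‖u‖ ^ 2 :=
    calc (⟪u, A u⟫_ℂ).re ≤ ‖u‖ * ‖A u‖ := re_inner_le_norm (𝕜 := ℂ) u (A u)
      _ ≤ ‖u‖ * (M * ‖u‖) := by gcongr
      _ = M * ‖u‖ ^ 2 := by ring
  have hshift : (⟪x - z • u, A u⟫_ℂ).re = (⟪x, A u⟫_ℂ).re - z.re * (⟪u, A u⟫_ℂ).re := by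
    simp [← him, mul_comm]
  have hzr : z.re * (⟪u, A u⟫_ℂ).re ≤ c / 2 * ‖u‖ ^ 2 :=
    calc z.re * (⟪u, A u⟫_ℂ).re ≤ c / (2 * M) * (M * ‖u‖ ^ 2) := by gcongr
      _ = c / 2 * ‖u‖ ^ 2 := by field_simp
  have hupper : (⟪x - z • u, A u⟫_ℂ).re ≤ ‖x - z • u‖ * (M * ‖u‖) :=
    (re_inner_le_norm (𝕜 := ℂ) _ _).trans (by gcongr)
  rcases (norm_nonneg u).eq_or_lt with hu | hu
  · simp [← hu]
  · refine le_of_mul_le_mul_right ?_ (mul_pos hM hu)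
    calc c / (2 * M) * ‖u‖ * (M * ‖u‖) = c / 2 * ‖u‖ ^ 2 := by field_simp
      _ ≤ ‖x - z • u‖ * (M * ‖u‖) := by linarith

section Complete
variable [CompleteSpace H]

theorem norm_smul_add_adjoint_le (L : H →L[ℂ] H) {ε : ℝ} (hε : 0 ≤ ε) :
    ‖ε • (L + adjoint L)‖ ≤ 2 * ε * ‖L‖ := by
  calc ‖ε • (L + adjoint L)‖ = ε * ‖L + adjoint L‖ := by rw [norm_smul, Real.norm_of_nonneg hε]
    _ ≤ ε * (‖L‖ + ‖adjoint L‖) := by gcongr; exact norm_add_le _ _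
    _ = 2 * ε * ‖L‖ := by rw [LinearIsometryEquiv.norm_map]; ring

theorem isPositive_one_add_smul_add_adjoint (L : H →L[ℂ] H) {ε : ℝ} (hε : 0 ≤ ε)
    (hεL : 2 * ε * ‖L‖ ≤ 1) : (1 + ε • (L + adjoint L)).IsPositive := by
  rw [← nonneg_iff_isPositive, ← star_eq_adjoint]
  exact ((IsSelfAdjoint.all ε).smul (IsSelfAdjoint.add_star_self L)).one_add_nonneg_of_norm_le_one
    ((star_eq_adjoint L ▸ norm_smul_add_adjoint_le L hε).trans hεL)

theorem norm_one_add_smul_add_adjoint_le (L : H →L[ℂ] H) {ε : ℝ} (hε : 0 ≤ ε) :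
    ‖1 + ε • (L + adjoint L)‖ ≤ 1 + 2 * ε * ‖L‖ :=
  (norm_add_le _ _).trans (add_le_add norm_id_le (norm_smul_add_adjoint_le L hε))

end Complete

end ContinuousLinearMap

theorem stmt_16_general {H : Type*} [NormedAddCommGroup H] [InnerProductSpace ℂ H] [CompleteSpace H]
    (P : H →ₗ.[ℂ] H) (L : H →L[ℂ] H) (ε : ℝ) (hε : 0 < ε) (hεL : 2 * ε * ‖L‖ ≤ 1)
    (c₀ : ℝ) (hc₀ : 0 < c₀) (S : Submodule ℂ H) (hSP : S ≤ P.domain)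
    (hcoer : ∀ (u : H) (hu : u ∈ S),
      c₀ * ‖u‖ ^ 2 ≤
        (inner ℂ (P ⟨u, hSP hu⟩) (u + ε • (L u + ContinuousLinearMap.adjoint L u)) : ℂ).re) :
    ∀ z : ℂ, z.re ≤ c₀ / (2 * (1 + 2 * ε * ‖L‖)) →
      ∀ (u : H) (hu : u ∈ S),
        c₀ / (2 * (1 + 2 * ε * ‖L‖)) * ‖u‖ ≤ ‖P ⟨u, hSP hu⟩ - z • u‖ := by
  intro z hz u hu
  refine (L.isPositive_one_add_smul_add_adjoint hε.le hεL).mul_norm_le_norm_sub_smul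
    (by positivity) (L.norm_one_add_smul_add_adjoint_le hε.le) hc₀.le ?_ hz
  simpa using hcoer u hu

/-- Hypocoercive estimate implies resolvent estimate: if
`Re(Pu, (Id + ε(L+L*))u) ≥ c₀‖u‖²` on a dense subspace `S` of a closed subspace `K`, with
`2ε‖L‖ ≤ 1`, then for `Re z ≤ c₀/(2(1+2ε‖L‖))` one has
`‖(P - z)u‖ ≥ (c₀/(2(1+2ε‖L‖)))‖u‖` for all `u ∈ S`. -/
theorem stmt_16 {H : Type*} [NormedAddCommGroup H] [InnerProductSpace ℂ H] [CompleteSpace H]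
    (P : H →ₗ.[ℂ] H) (hdense : Dense (P.domain : Set H))
    (L : H →L[ℂ] H) (ε : ℝ) (hε : 0 < ε) (hεL : 2 * ε * ‖L‖ ≤ 1)
    (c₀ : ℝ) (hc₀ : 0 < c₀)
    (K S : Submodule ℂ H) (hKclosed : IsClosed (K : Set H))
    (hSP : S ≤ P.domain) (hSK : S ≤ K) (hSdense : closure (S : Set H) = K)
    (hcoer : ∀ (u : H) (hu : u ∈ S),
      c₀ * ‖u‖ ^ 2 ≤
        (inner ℂ (P ⟨u, hSP hu⟩) (u + ε • (L u + ContinuousLinearMap.adjoint L u)) : ℂ).re) :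
    ∀ z : ℂ, z.re ≤ c₀ / (2 * (1 + 2 * ε * ‖L‖)) →
      ∀ (u : H) (hu : u ∈ S),
        c₀ / (2 * (1 + 2 * ε * ‖L‖)) * ‖u‖ ≤ ‖P ⟨u, hSP hu⟩ - z • u‖ :=
  stmt_16_general P L ε hε hεL c₀ hc₀ S hSP hcoer
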